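/- arXiv:1603.07344 — 4 statements merged into one kernel-verified Lean document; each statement's English description precedes it below -/
import Mathlib

section
/- The function H(y) = tanh(y/√2) is, up to sign, the unique bounded odd solution of -H'' = H - H³ that is not identically zero and tends to 1 at +∞. -/
open Filter Topology Real Set

/-!
Multiplying the equation by `H'` gives the first integral `H'² - (1 - H²)² / 2 = c`. The limit
`H → 1` forces `c = 0`: on one side `c ≤ H'²`, and by the mean value theorem `H'²` takes the values
`(H (y + 1) - H y)² → 0`; on the other `c ≥ -(1 - H²)² / 2 → 0`. The derivative of `1 - H²` is
then bounded by a multiple of `1 - H²`, so by Grönwall `1 - H²` never vanishes, and `H 0 = 0`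
gives `|H| < 1`. Hence `H'` has no zero, and by connectedness and `H → 1` we get
`H' = (1 - H²) / √2`. The function `tanh (y / √2)` solves this equation, which is Lipschitz on
`[-1, 1]`, with the same value at `0`, and Grönwall identifies the two.
-/

theorem eq_zero_of_norm_deriv_le_mul_norm {E : Type*} [NormedAddCommGroup E] [NormedSpace ℝ E]
    {f f' : ℝ → E} {K a : ℝ} (hf : ∀ x, HasDerivAt f (f' x) x)
    (bound : ∀ x, ‖f' x‖ ≤ K * ‖f x‖) (ha : f a = 0) (b : ℝ) : f b = 0 := by
  rcases le_total a b with hab | hba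
  · exact eq_zero_of_abs_deriv_le_mul_abs_self_of_eq_zero_right
      (HasDerivAt.continuousOn fun x _ ↦ hf x) (fun x _ ↦ (hf x).hasDerivWithinAt) ha
      (fun x _ ↦ bound x) b ⟨hab, le_rfl⟩
  · have hreflect : ∀ x, HasDerivAt (fun x ↦ f (-x)) (-f' (-x)) x := fun x ↦ by
      simpa [Function.comp_def] using (hf (-x)).scomp x (hasDerivAt_neg x)
    simpa using eq_zero_of_abs_deriv_le_mul_abs_self_of_eq_zero_right
      (HasDerivAt.continuousOn fun x _ ↦ hreflect x) (fun x _ ↦ (hreflect x).hasDerivWithinAt)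
      (by simpa using ha) (fun x _ ↦ by simpa using bound (-x)) (-b) ⟨neg_le_neg hba, le_rfl⟩

theorem Continuous.forall_pos_of_forall_ne_zero {X : Type*} [TopologicalSpace X]
    [PreconnectedSpace X] {f : X → ℝ} (hf : Continuous f) (hne : ∀ x, f x ≠ 0) {a : X}
    (ha : 0 < f a) (x : X) : 0 < f x := by
  by_contra! hx
  obtain ⟨z, hz⟩ := intermediate_value_univ x a hf ⟨hx, ha.le⟩
  exact hne z hz

theorem sq_deriv_sub_two_mul_potential_eq {f V g : ℝ → ℝ} (hf : ContDiff ℝ 2 f)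
    (hV : ∀ x, HasDerivAt V (g x) x) (hode : ∀ y, deriv (deriv f) y = g (f y)) (y : ℝ) :
    deriv f y ^ 2 - 2 * V (f y) = deriv f 0 ^ 2 - 2 * V (f 0) := by
  have hdf : Differentiable ℝ f := hf.differentiable (by norm_num)
  have hddf : Differentiable ℝ (deriv f) :=
    (hf.iterate_deriv' 1 1).differentiable (by norm_num)
  have henergy : ∀ x, HasDerivAt (fun y ↦ deriv f y ^ 2 - 2 * V (f y)) 0 x := fun x ↦ by
    refine (((hddf x).hasDerivAt.pow 2).sub
      (((hV (f x)).comp x (hdf x).hasDerivAt).const_mul 2)).congr_deriv ?_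
    rw [hode]
    ring
  exact is_const_of_deriv_eq_zero (fun x ↦ (henergy x).differentiableAt)
    (fun x ↦ (henergy x).deriv) y 0

theorem eq_zero_of_sq_deriv_sub_eq {f W : ℝ → ℝ} {L c : ℝ} (hf : Differentiable ℝ f)
    (hlim : Tendsto f atTop (𝓝 L)) (hW : ContinuousAt W L) (hWL : W L = 0)
    (hW0 : ∀ x, 0 ≤ W x) (h : ∀ y, deriv f y ^ 2 - W (f y) = c) : c = 0 := by
  have hc_le : ∀ y, c ≤ (f (y + 1) - f y) ^ 2 := fun y ↦ by
    obtain ⟨ξ, -, hξ⟩ := exists_deriv_eq_slope f (lt_add_one y) hf.continuous.continuousOn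
      hf.differentiableOn
    rw [add_sub_cancel_left, div_one] at hξ
    rw [← hξ, ← h ξ]
    linarith [hW0 (f ξ)]
  have hincrement : Tendsto (fun y ↦ (f (y + 1) - f y) ^ 2) atTop (𝓝 ((L - L) ^ 2)) :=
    ((hlim.comp (tendsto_atTop_add_const_right _ 1 tendsto_id)).sub hlim).pow 2
  have hW_lim : Tendsto (fun y ↦ -W (f y)) atTop (𝓝 (-W L)) := (hW.tendsto.comp hlim).neg
  have hc_nonpos : c ≤ 0 := by
    simpa using le_of_tendsto_of_tendsto' tendsto_const_nhds hincrement hc_le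
  have hc_nonneg : 0 ≤ c := by
    rw [hWL, neg_zero] at hW_lim
    exact le_of_tendsto_of_tendsto' hW_lim tendsto_const_nhds fun y ↦ by
      linarith [h y, sq_nonneg (deriv f y)]
  exact le_antisymm hc_nonpos hc_nonneg

theorem sq_deriv_eq_of_tendsto_one {f : ℝ → ℝ} (hf : ContDiff ℝ 2 f)
    (hode : ∀ y, -deriv (deriv f) y = f y - f y ^ 3) (hlim : Tendsto f atTop (𝓝 1)) (y : ℝ) :
    deriv f y ^ 2 = (1 - f y ^ 2) ^ 2 / 2 := by
  have hV : ∀ x : ℝ, HasDerivAt (fun x ↦ (1 - x ^ 2) ^ 2 / 4) (x ^ 3 - x) x := fun x ↦ by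
    refine ((((hasDerivAt_pow 2 x).const_sub 1).pow 2).div_const 4).congr_deriv ?_
    push_cast
    ring
  have henergy := sq_deriv_sub_two_mul_potential_eq hf hV fun y ↦ by linarith [hode y]
  have hzero := eq_zero_of_sq_deriv_sub_eq (W := fun x ↦ 2 * ((1 - x ^ 2) ^ 2 / 4))
    (hf.differentiable (by norm_num)) hlim (by fun_prop) (by norm_num) (fun x ↦ by positivity)
    henergy
  linarith [henergy y]

theorem sq_lt_one_of_sq_deriv_eq {f : ℝ → ℝ} (hf : Differentiable ℝ f)
    (hbdd : ∃ M, ∀ y, |f y| ≤ M) (hsq : ∀ y, deriv f y ^ 2 = (1 - f y ^ 2) ^ 2 / 2)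
    {a : ℝ} (ha : f a ^ 2 < 1) (y : ℝ) : f y ^ 2 < 1 := by
  obtain ⟨M, hM⟩ := hbdd
  have hk : ∀ x, HasDerivAt (fun x ↦ 1 - f x ^ 2) (-(2 * f x * deriv f x)) x := fun x ↦ by
    refine (((hf x).hasDerivAt.pow 2).const_sub 1).congr_deriv ?_
    ring
  have hbound : ∀ x, ‖-(2 * f x * deriv f x)‖ ≤ 2 * M * ‖1 - f x ^ 2‖ := fun x ↦ by
    have hderiv_le : |deriv f x| ≤ |1 - f x ^ 2| :=
      sq_le_sq.1 (by nlinarith [hsq x, sq_nonneg (1 - f x ^ 2)])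
    rw [Real.norm_eq_abs, Real.norm_eq_abs, abs_neg, abs_mul, abs_mul, abs_two, mul_assoc,
      mul_assoc]
    gcongr
    · exact (abs_nonneg _).trans (hM x)
    · exact hM x
  have hne : ∀ x, 1 - f x ^ 2 ≠ 0 := fun x hx ↦ by
    have := eq_zero_of_norm_deriv_le_mul_norm hk hbound hx a
    linarith
  have hcont : Continuous fun x ↦ 1 - f x ^ 2 := continuous_const.sub (hf.continuous.pow 2)
  linarith [hcont.forall_pos_of_forall_ne_zero hne (sub_pos.2 ha) y]

theorem deriv_eq_of_sq_deriv_eq {f : ℝ → ℝ} (hf : ContDiff ℝ 1 f)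
    (hsq : ∀ y, deriv f y ^ 2 = (1 - f y ^ 2) ^ 2 / 2) (hlt : ∀ y, f y ^ 2 < 1) (h0 : f 0 = 0)
    (hlim : Tendsto f atTop (𝓝 1)) (y : ℝ) : deriv f y = (1 - f y ^ 2) / √2 := by
  have hdf : Differentiable ℝ f := hf.differentiable one_ne_zero
  set g : ℝ → ℝ := fun y ↦ (1 - f y ^ 2) / √2
  have hg_pos : ∀ y, 0 < g y := fun y ↦ div_pos (by linarith [hlt y]) (by positivity)
  have hsq_eq : EqOn (deriv f ^ 2) (g ^ 2) univ := fun y _ ↦ by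
    simp only [Pi.pow_apply, g, div_pow, sq_sqrt zero_le_two, hsq y]
  rcases isPreconnected_univ.eq_or_eq_neg_of_sq_eq (hf.continuous_deriv le_rfl).continuousOn
    ((continuous_const.sub (hdf.continuous.pow 2)).div_const _).continuousOn hsq_eq
    (fun _ ↦ (hg_pos _).ne') with h | h
  · exact h (mem_univ y)
  · have hanti : Antitone f := antitone_of_deriv_nonpos hdf fun x ↦ by
      rw [h (mem_univ x)]
      exact neg_nonpos.2 (hg_pos x).le
    have : (1 : ℝ) ≤ 0 := le_of_tendsto hlim <|
      (eventually_ge_atTop 0).mono fun x hx ↦ h0 ▸ hanti hx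
    norm_num at this

theorem hasDerivAt_tanh (x : ℝ) : HasDerivAt tanh (1 - tanh x ^ 2) x := by
  have hcosh : cosh x ≠ 0 := (cosh_pos x).ne'
  have h := (hasDerivAt_sinh x).div (hasDerivAt_cosh x) hcosh
  rw [show sinh / cosh = tanh from funext fun y ↦ (tanh_eq_sinh_div_cosh y).symm] at h
  refine h.congr_deriv ?_
  rw [tanh_eq_sinh_div_cosh]
  field_simp

theorem eq_tanh_of_hasDerivAt {f : ℝ → ℝ} (hf : ∀ y, HasDerivAt f ((1 - f y ^ 2) / √2) y)
    (hle : ∀ y, |f y| ≤ 1) (h0 : f 0 = 0) (y : ℝ) : f y = tanh (y / √2) := by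
  set G : ℝ → ℝ := fun y ↦ tanh (y / √2)
  have hG : ∀ y, HasDerivAt G ((1 - G y ^ 2) / √2) y := fun y ↦ by
    refine ((hasDerivAt_tanh _).comp y ((hasDerivAt_id y).div_const √2)).congr_deriv ?_
    simp only [G, id]
    ring
  have hsqrt : 1 ≤ √2 := one_le_sqrt.2 one_le_two
  have hbound : ∀ y, ‖(1 - f y ^ 2) / √2 - (1 - G y ^ 2) / √2‖ ≤ 2 * ‖f y - G y‖ := fun y ↦ by
    have hGle : |G y| ≤ 1 := (abs_tanh_lt_one _).le
    have hdiff : 1 - f y ^ 2 - (1 - G y ^ 2) = -((f y - G y) * (f y + G y)) := by ring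
    rw [Real.norm_eq_abs, Real.norm_eq_abs, ← sub_div, hdiff, abs_div, abs_neg, abs_mul,
      abs_of_pos (sqrt_pos.2 two_pos), div_le_iff₀ (sqrt_pos.2 two_pos)]
    nlinarith [abs_add_le (f y) (G y), hle y, abs_nonneg (f y - G y)]
  exact sub_eq_zero.1 <| eq_zero_of_norm_deriv_le_mul_norm (f := fun y ↦ f y - G y)
    (a := 0) (fun y ↦ (hf y).sub (hG y)) hbound (by simp [G, h0]) y

theorem kink_unique_general (H : ℝ → ℝ)
    (hC2 : ContDiff ℝ 2 H)
    (hbdd : ∃ M : ℝ, ∀ y : ℝ, |H y| ≤ M)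
    (hodd : ∀ y : ℝ, H (-y) = -H y)
    (hODE : ∀ y : ℝ, -(deriv (deriv H) y) = H y - (H y) ^ 3)
    (hlim : Filter.Tendsto H Filter.atTop (nhds 1)) :
    ∀ y : ℝ, H y = Real.tanh (y / Real.sqrt 2) := by
  have hH0 : H 0 = 0 := by linarith [show H 0 = -H 0 by simpa using hodd 0]
  have hdiff : Differentiable ℝ H := hC2.differentiable (by norm_num)
  have hsq := sq_deriv_eq_of_tendsto_one hC2 hODE hlim
  have hlt := sq_lt_one_of_sq_deriv_eq hdiff hbdd hsq (a := 0) (by simp [hH0])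
  have hderiv := deriv_eq_of_sq_deriv_eq (hC2.of_le one_le_two) hsq hlt hH0 hlim
  exact eq_tanh_of_hasDerivAt (fun y ↦ hderiv y ▸ (hdiff y).hasDerivAt)
    (fun y ↦ (sq_lt_one_iff_abs_lt_one _).1 (hlt y) |>.le) hH0

/-- Up to sign, H(y) = tanh(y/√2) is the unique bounded odd C² solution of
-H'' = H - H³ that is not identically zero and tends to 1 at +∞. -/
theorem kink_unique (H : ℝ → ℝ)
    (hC2 : ContDiff ℝ 2 H)
    (hbdd : ∃ M : ℝ, ∀ y : ℝ, |H y| ≤ M)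
    (hodd : ∀ y : ℝ, H (-y) = -H y)
    (hODE : ∀ y : ℝ, -(deriv (deriv H) y) = H y - (H y) ^ 3)
    (hne : H ≠ 0)
    (hlim : Filter.Tendsto H Filter.atTop (nhds 1)) :
    ∀ y : ℝ, H y = Real.tanh (y / Real.sqrt 2) :=
  kink_unique_general H hC2 hbdd hodd hODE hlim
end

section
/- The function Z₁(y) = -(1/4) sech(y/√2)[-5 + 3√2 y tanh(y/√2) + cosh(√2 y)] satisfies ℒZ₁ = (3/2)Z₁, Z₁'(0) = 0, and Z₁(0) = 1, where ℒ = -d²/dy² - 1 + 3tanh²(y/√2). -/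
/-!
With u = y/√2 and cosh 2u = cosh² u + sinh² u, Z₁(y) = G(u) where
G(u) = (3/2) sech u - (3/2) u sinh u sech² u - (1/2) cosh u. Since d²/dy² = (1/2) d²/du², the
eigenvalue equation ℒZ₁ = (3/2)Z₁ becomes G'' = (6 tanh² u - 5) G, which is checked by
differentiating G twice and clearing the powers of cosh u with cosh² u - sinh² u = 1.
-/

open Real

theorem deriv_deriv_comp_mul_left {𝕜 E : Type*} [NontriviallyNormedField 𝕜]
    [NormedAddCommGroup E] [NormedSpace 𝕜 E] (c : 𝕜) (f : 𝕜 → E) (x : 𝕜) :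
    deriv (deriv fun y => f (c * y)) x = c ^ 2 • deriv (deriv f) (c * x) := by
  have h : deriv (fun y => f (c * y)) = c • fun y => deriv f (c * y) :=
    funext (deriv_comp_mul_left c f)
  rw [h, deriv_const_smul_field, deriv_comp_mul_left, smul_smul, sq]

noncomputable def scaledZ1 (u : ℝ) : ℝ :=
  3 / 2 / cosh u - 3 / 2 * u * sinh u / cosh u ^ 2 - cosh u / 2

noncomputable def scaledZ1' (u : ℝ) : ℝ :=
  -3 * sinh u / cosh u ^ 2 - 3 / 2 * u / cosh u + 3 * u * sinh u ^ 2 / cosh u ^ 3 - sinh u / 2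

theorem hasDerivAt_scaledZ1 (u : ℝ) : HasDerivAt scaledZ1 (scaledZ1' u) u := by
  have hc : cosh u ≠ 0 := (cosh_pos u).ne'
  have h := ((hasDerivAt_const u (3 / 2 : ℝ)).div (hasDerivAt_cosh u) hc).sub
    ((((hasDerivAt_id u).const_mul (3 / 2 : ℝ)).mul (hasDerivAt_sinh u)).div
      ((hasDerivAt_cosh u).pow 2) (pow_ne_zero 2 hc)) |>.sub ((hasDerivAt_cosh u).div_const 2)
  refine h.congr_deriv ?_
  simp only [scaledZ1', Pi.pow_apply, Pi.mul_apply, id]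
  field_simp
  ring

theorem hasDerivAt_scaledZ1' (u : ℝ) :
    HasDerivAt scaledZ1' ((6 * tanh u ^ 2 - 5) * scaledZ1 u) u := by
  have hc : cosh u ≠ 0 := (cosh_pos u).ne'
  have h := ((((hasDerivAt_sinh u).const_mul (-3 : ℝ)).div ((hasDerivAt_cosh u).pow 2)
      (pow_ne_zero 2 hc)).sub (((hasDerivAt_id u).const_mul (3 / 2 : ℝ)).div
      (hasDerivAt_cosh u) hc)).add ((((hasDerivAt_id u).const_mul (3 : ℝ)).mul
      ((hasDerivAt_sinh u).pow 2)).div ((hasDerivAt_cosh u).pow 3) (pow_ne_zero 3 hc))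
      |>.sub ((hasDerivAt_sinh u).div_const 2)
  refine h.congr_deriv ?_
  have hsinh : sinh u ^ 2 = cosh u ^ 2 - 1 := by rw [cosh_sq u]; ring
  simp only [scaledZ1, tanh_eq_sinh_div_cosh, Pi.pow_apply, Pi.mul_apply, id]
  field_simp
  linear_combination (6 * cosh u ^ 5) * hsinh

theorem deriv_deriv_scaledZ1 (u : ℝ) :
    deriv (deriv scaledZ1) u = (6 * tanh u ^ 2 - 5) * scaledZ1 u := by
  rw [funext fun v => (hasDerivAt_scaledZ1 v).deriv]
  exact (hasDerivAt_scaledZ1' u).deriv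

theorem Z1_eq_scaledZ1 (x : ℝ) :
    -(1 / 4) * (cosh (x / √2))⁻¹ * (-5 + 3 * √2 * x * tanh (x / √2) + cosh (√2 * x))
      = scaledZ1 ((√2)⁻¹ * x) := by
  have hx : √2 * x = 2 * ((√2)⁻¹ * x) := by
    field_simp
    rw [sq_sqrt zero_le_two]
    ring
  rw [div_eq_inv_mul x, mul_assoc 3, hx]
  set u := (√2)⁻¹ * x
  have hc : cosh u ≠ 0 := (cosh_pos u).ne'
  rw [cosh_two_mul, tanh_eq_sinh_div_cosh, scaledZ1]
  field_simp
  linear_combination (2 * cosh u) * cosh_sq_sub_sinh_sq u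

/-- Z₁(y) = -(1/4)sech(y/√2)[-5 + 3√2·y·tanh(y/√2) + cosh(√2 y)] satisfies
ℒZ₁ = (3/2)Z₁, Z₁'(0) = 0, and Z₁(0) = 1, with ℒ = -d²/dy² - 1 + 3 tanh²(y/√2). -/
theorem Z1_properties :
    (∀ y : ℝ,
      -(deriv (deriv (fun x : ℝ =>
          -(1 / 4) * (Real.cosh (x / Real.sqrt 2))⁻¹
            * (-5 + 3 * Real.sqrt 2 * x * Real.tanh (x / Real.sqrt 2)
                + Real.cosh (Real.sqrt 2 * x)))) y)
        - (-(1 / 4) * (Real.cosh (y / Real.sqrt 2))⁻¹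
            * (-5 + 3 * Real.sqrt 2 * y * Real.tanh (y / Real.sqrt 2)
                + Real.cosh (Real.sqrt 2 * y)))
        + 3 * (Real.tanh (y / Real.sqrt 2)) ^ 2
            * (-(1 / 4) * (Real.cosh (y / Real.sqrt 2))⁻¹
                * (-5 + 3 * Real.sqrt 2 * y * Real.tanh (y / Real.sqrt 2)
                    + Real.cosh (Real.sqrt 2 * y)))
      = (3 / 2) * (-(1 / 4) * (Real.cosh (y / Real.sqrt 2))⁻¹
            * (-5 + 3 * Real.sqrt 2 * y * Real.tanh (y / Real.sqrt 2)
                + Real.cosh (Real.sqrt 2 * y)))) ∧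
    deriv (fun x : ℝ =>
        -(1 / 4) * (Real.cosh (x / Real.sqrt 2))⁻¹
          * (-5 + 3 * Real.sqrt 2 * x * Real.tanh (x / Real.sqrt 2)
              + Real.cosh (Real.sqrt 2 * x))) 0 = 0 ∧
    -(1 / 4) * (Real.cosh ((0:ℝ) / Real.sqrt 2))⁻¹
        * (-5 + 3 * Real.sqrt 2 * 0 * Real.tanh ((0:ℝ) / Real.sqrt 2)
            + Real.cosh (Real.sqrt 2 * 0)) = 1 := by
  simp only [Z1_eq_scaledZ1]
  refine ⟨fun y => ?_, ?_, by norm_num [scaledZ1]⟩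
  · have hsq : ((√2)⁻¹ : ℝ) ^ 2 = 1 / 2 := by rw [inv_pow, sq_sqrt zero_le_two, one_div]
    rw [deriv_deriv_comp_mul_left, smul_eq_mul, hsq, deriv_deriv_scaledZ1, div_eq_inv_mul y]
    ring
  · rw [deriv_comp_mul_left, (hasDerivAt_scaledZ1 _).deriv]
    simp [scaledZ1']
end

section
/- The function k(y) = e^{2iy}(1 + (1/2)sech²(y/√2) + i√2 tanh(y/√2)) satisfies ℒk = 6k, i.e. (-ℒ + 6)k = 0, where ℒ = -d²/dy² - 1 + 3tanh²(y/√2); equivalently k'' + k - 3tanh²(y/√2)·k + 6k = 0. -/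
open Complex

private lemma aux_t (x : ℝ) :
    HasDerivAt (fun x : ℝ => Real.tanh (x / Real.sqrt 2))
      (((Real.cosh (x / Real.sqrt 2))⁻¹) ^ 2 / Real.sqrt 2) x := by
  have hdiv : HasDerivAt (fun x : ℝ => x / Real.sqrt 2) (1 / Real.sqrt 2) x := by
    simpa using (hasDerivAt_id x).div_const (Real.sqrt 2)
  have hsinh := (Real.hasDerivAt_sinh (x / Real.sqrt 2)).comp x hdiv
  have hcosh := (Real.hasDerivAt_cosh (x / Real.sqrt 2)).comp x hdiv
  have hc := (Real.cosh_pos (x / Real.sqrt 2)).ne'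
  have h := hsinh.div hcosh hc
  simp only [Function.comp_def] at h
  simp only [Pi.div_def] at h
  simp only [← Real.tanh_eq_sinh_div_cosh] at h
  convert h using 1
  any_goals with_reducible_and_instances rfl
  have hid := Real.cosh_sq_sub_sinh_sq (x / Real.sqrt 2)
  have h2 : Real.sqrt 2 ≠ 0 := by positivity
  field_simp
  linear_combination (-1 : ℝ) * hid

private lemma aux_s (x : ℝ) :
    HasDerivAt (fun x : ℝ => (Real.cosh (x / Real.sqrt 2))⁻¹)
      (-(Real.tanh (x / Real.sqrt 2) * (Real.cosh (x / Real.sqrt 2))⁻¹ / Real.sqrt 2)) x := by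
  have hdiv : HasDerivAt (fun x : ℝ => x / Real.sqrt 2) (1 / Real.sqrt 2) x := by
    simpa using (hasDerivAt_id x).div_const (Real.sqrt 2)
  have hcosh := (Real.hasDerivAt_cosh (x / Real.sqrt 2)).comp x hdiv
  have hc := (Real.cosh_pos (x / Real.sqrt 2)).ne'
  have h := hcosh.inv hc
  simp only [Function.comp_def] at h
  simp only [Pi.inv_def] at h
  convert h using 1
  any_goals with_reducible_and_instances rfl
  have h2 : Real.sqrt 2 ≠ 0 := by positivity
  rw [Real.tanh_eq_sinh_div_cosh, eq_div_iff (pow_ne_zero 2 hc)]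
  field_simp

private lemma aux_k1 (x : ℝ) :
    HasDerivAt (fun x : ℝ =>
        Complex.exp (2 * Complex.I * (x : ℂ))
          * (1 + (1 / 2) * (((Real.cosh (x / Real.sqrt 2))⁻¹ : ℝ) : ℂ) ^ 2
              + Complex.I * ((Real.sqrt 2 : ℝ) : ℂ)
                  * ((Real.tanh (x / Real.sqrt 2) : ℝ) : ℂ)))
      (Complex.exp (2 * Complex.I * (x : ℂ)) *
        (2 * Complex.I
          + 2 * Complex.I * (((Real.cosh (x / Real.sqrt 2))⁻¹ : ℝ) : ℂ) ^ 2
          - 2 * ((Real.sqrt 2 : ℝ) : ℂ) * ((Real.tanh (x / Real.sqrt 2) : ℝ) : ℂ)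
          - (((Real.cosh (x / Real.sqrt 2))⁻¹ : ℝ) : ℂ) ^ 2
              * ((Real.tanh (x / Real.sqrt 2) : ℝ) : ℂ)
              * (((Real.sqrt 2 : ℝ) : ℂ))⁻¹)) x := by
  have ht := (aux_t x).ofReal_comp
  have hs := (aux_s x).ofReal_comp
  have hE : HasDerivAt (fun x : ℝ => Complex.exp (2 * Complex.I * (x : ℂ)))
      (2 * Complex.I * Complex.exp (2 * Complex.I * (x : ℂ))) x := by
    have hin : HasDerivAt (fun x : ℝ => 2 * Complex.I * (x : ℂ)) (2 * Complex.I) x := by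
      simpa using ((hasDerivAt_id x).ofReal_comp).const_mul (2 * Complex.I)
    simpa [Function.comp_def, mul_comm] using
      (Complex.hasDerivAt_exp (2 * Complex.I * (x : ℂ))).comp x hin
  have hg1 := (hs.mul hs).const_mul ((1:ℂ)/2)
  have hg2 := hg1.const_add (1:ℂ)
  have hg3 := ht.const_mul (Complex.I * ((Real.sqrt 2 : ℝ) : ℂ))
  have hg := hg2.add hg3
  have hk := hE.mul hg
  have h2 : ((Real.sqrt 2 : ℝ) : ℂ) ≠ 0 := by
    norm_cast
    positivity
  simp only [Pi.mul_def, Pi.add_def] at hk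
  convert hk using 1
  any_goals with_reducible_and_instances rfl
  · funext y
    push_cast
    ring
  · push_cast
    have h2' : ((Real.sqrt 2 : ℝ) : ℂ) * (((Real.sqrt 2 : ℝ) : ℂ))⁻¹ = 1 := mul_inv_cancel₀ h2
    linear_combination (-Complex.I * Complex.exp (2 * Complex.I * (x : ℂ))
        * ((Complex.cosh ((x : ℂ) / ((Real.sqrt 2 : ℝ) : ℂ)))⁻¹) ^ 2) * h2'
      + (-2 * ((Real.sqrt 2 : ℝ) : ℂ) * Complex.exp (2 * Complex.I * (x : ℂ))
        * Complex.tanh ((x : ℂ) / ((Real.sqrt 2 : ℝ) : ℂ))) * Complex.I_sq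

private lemma aux_k2 (x : ℝ) :
    HasDerivAt (fun x : ℝ =>
      Complex.exp (2 * Complex.I * (x : ℂ)) *
        (2 * Complex.I
          + 2 * Complex.I * (((Real.cosh (x / Real.sqrt 2))⁻¹ : ℝ) : ℂ) ^ 2
          - 2 * ((Real.sqrt 2 : ℝ) : ℂ) * ((Real.tanh (x / Real.sqrt 2) : ℝ) : ℂ)
          - (((Real.cosh (x / Real.sqrt 2))⁻¹ : ℝ) : ℂ) ^ 2
              * ((Real.tanh (x / Real.sqrt 2) : ℝ) : ℂ)
              * (((Real.sqrt 2 : ℝ) : ℂ))⁻¹))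
      (Complex.exp (2 * Complex.I * (x : ℂ)) *
        (-4 - 6 * (((Real.cosh (x / Real.sqrt 2))⁻¹ : ℝ) : ℂ) ^ 2
          - 4 * Complex.I * ((Real.sqrt 2 : ℝ) : ℂ) * ((Real.tanh (x / Real.sqrt 2) : ℝ) : ℂ)
          - 6 * Complex.I * (((Real.cosh (x / Real.sqrt 2))⁻¹ : ℝ) : ℂ) ^ 2
              * ((Real.tanh (x / Real.sqrt 2) : ℝ) : ℂ) * (((Real.sqrt 2 : ℝ) : ℂ))⁻¹
          + 2 * (((Real.cosh (x / Real.sqrt 2))⁻¹ : ℝ) : ℂ) ^ 2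
              * ((Real.tanh (x / Real.sqrt 2) : ℝ) : ℂ) ^ 2
              * (((Real.sqrt 2 : ℝ) : ℂ))⁻¹ * (((Real.sqrt 2 : ℝ) : ℂ))⁻¹
          - (((Real.cosh (x / Real.sqrt 2))⁻¹ : ℝ) : ℂ) ^ 4
              * (((Real.sqrt 2 : ℝ) : ℂ))⁻¹ * (((Real.sqrt 2 : ℝ) : ℂ))⁻¹)) x := by
  have ht := (aux_t x).ofReal_comp
  have hs := (aux_s x).ofReal_comp
  have hE : HasDerivAt (fun x : ℝ => Complex.exp (2 * Complex.I * (x : ℂ)))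
      (2 * Complex.I * Complex.exp (2 * Complex.I * (x : ℂ))) x := by
    have hin : HasDerivAt (fun x : ℝ => 2 * Complex.I * (x : ℂ)) (2 * Complex.I) x := by
      simpa using ((hasDerivAt_id x).ofReal_comp).const_mul (2 * Complex.I)
    simpa [Function.comp_def, mul_comm] using
      (Complex.hasDerivAt_exp (2 * Complex.I * (x : ℂ))).comp x hin
  have h2 : ((Real.sqrt 2 : ℝ) : ℂ) ≠ 0 := by
    norm_cast
    positivity
  have hp1 := (hs.mul hs).const_mul (2 * Complex.I)
  have hp2 := hp1.const_add (2 * Complex.I)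
  have hp3 := ht.const_mul (2 * ((Real.sqrt 2 : ℝ) : ℂ))
  have hp4 := hp2.sub hp3
  have hp5 := ((hs.mul hs).mul ht).mul_const ((((Real.sqrt 2 : ℝ) : ℂ))⁻¹)
  have hP := hp4.sub hp5
  have hk2 := hE.mul hP
  simp only [Pi.mul_def, Pi.add_def, Pi.sub_def] at hk2
  convert hk2 using 1
  any_goals with_reducible_and_instances rfl
  · funext y
    push_cast
    ring
  · push_cast
    have h2' : ((Real.sqrt 2 : ℝ) : ℂ) * (((Real.sqrt 2 : ℝ) : ℂ))⁻¹ = 1 := mul_inv_cancel₀ h2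
    linear_combination (2 * Complex.exp (2 * Complex.I * (x : ℂ))
        * ((Complex.cosh ((x : ℂ) / ((Real.sqrt 2 : ℝ) : ℂ)))⁻¹) ^ 2) * h2'
      + ((-4 - 4 * ((Complex.cosh ((x : ℂ) / ((Real.sqrt 2 : ℝ) : ℂ)))⁻¹) ^ 2)
          * Complex.exp (2 * Complex.I * (x : ℂ))) * Complex.I_sq

/-- k(y) = e^{2iy}(1 + (1/2)sech²(y/√2) + i√2 tanh(y/√2)) satisfies ℒk = 6k,
with ℒ = -d²/dy² - 1 + 3 tanh²(y/√2) acting componentwise. -/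
theorem k_eigen :
    ∀ y : ℝ,
      -(deriv (deriv (fun x : ℝ =>
          Complex.exp (2 * Complex.I * (x : ℂ))
            * (1 + (1 / 2) * (((Real.cosh (x / Real.sqrt 2))⁻¹ : ℝ) : ℂ) ^ 2
                + Complex.I * ((Real.sqrt 2 : ℝ) : ℂ)
                    * ((Real.tanh (x / Real.sqrt 2) : ℝ) : ℂ)))) y)
        - (Complex.exp (2 * Complex.I * (y : ℂ))
            * (1 + (1 / 2) * (((Real.cosh (y / Real.sqrt 2))⁻¹ : ℝ) : ℂ) ^ 2
                + Complex.I * ((Real.sqrt 2 : ℝ) : ℂ)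
                    * ((Real.tanh (y / Real.sqrt 2) : ℝ) : ℂ)))
        + 3 * (((Real.tanh (y / Real.sqrt 2) : ℝ) : ℂ)) ^ 2
            * (Complex.exp (2 * Complex.I * (y : ℂ))
                * (1 + (1 / 2) * (((Real.cosh (y / Real.sqrt 2))⁻¹ : ℝ) : ℂ) ^ 2
                    + Complex.I * ((Real.sqrt 2 : ℝ) : ℂ)
                        * ((Real.tanh (y / Real.sqrt 2) : ℝ) : ℂ)))
      = 6 * (Complex.exp (2 * Complex.I * (y : ℂ))
            * (1 + (1 / 2) * (((Real.cosh (y / Real.sqrt 2))⁻¹ : ℝ) : ℂ) ^ 2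
                + Complex.I * ((Real.sqrt 2 : ℝ) : ℂ)
                    * ((Real.tanh (y / Real.sqrt 2) : ℝ) : ℂ))) := by
  intro y
  have hd1 : deriv (fun x : ℝ =>
      Complex.exp (2 * Complex.I * (x : ℂ))
        * (1 + (1 / 2) * (((Real.cosh (x / Real.sqrt 2))⁻¹ : ℝ) : ℂ) ^ 2
            + Complex.I * ((Real.sqrt 2 : ℝ) : ℂ)
                * ((Real.tanh (x / Real.sqrt 2) : ℝ) : ℂ)))
      = fun x : ℝ => Complex.exp (2 * Complex.I * (x : ℂ)) *
        (2 * Complex.I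
          + 2 * Complex.I * (((Real.cosh (x / Real.sqrt 2))⁻¹ : ℝ) : ℂ) ^ 2
          - 2 * ((Real.sqrt 2 : ℝ) : ℂ) * ((Real.tanh (x / Real.sqrt 2) : ℝ) : ℂ)
          - (((Real.cosh (x / Real.sqrt 2))⁻¹ : ℝ) : ℂ) ^ 2
              * ((Real.tanh (x / Real.sqrt 2) : ℝ) : ℂ)
              * (((Real.sqrt 2 : ℝ) : ℂ))⁻¹) :=
    funext fun x => (aux_k1 x).deriv
  rw [hd1, (aux_k2 y).deriv]
  have hSr : ((Real.cosh (y / Real.sqrt 2))⁻¹) ^ 2 = 1 - Real.tanh (y / Real.sqrt 2) ^ 2 := by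
    have hc := (Real.cosh_pos (y / Real.sqrt 2)).ne'
    rw [Real.tanh_eq_sinh_div_cosh]
    field_simp
    exact (Real.cosh_sq_sub_sinh_sq _).symm
  have hS : (((Real.cosh (y / Real.sqrt 2))⁻¹ : ℝ) : ℂ) ^ 2
      = 1 - ((Real.tanh (y / Real.sqrt 2) : ℝ) : ℂ) ^ 2 := by exact_mod_cast hSr
  have hc2 : ((Real.sqrt 2 : ℝ) : ℂ) ^ 2 = 2 := by
    norm_cast
    exact Real.sq_sqrt (by norm_num)
  have h2 : ((Real.sqrt 2 : ℝ) : ℂ) ≠ 0 := by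
    norm_cast
    positivity
  have hci : (((Real.sqrt 2 : ℝ) : ℂ))⁻¹ = ((Real.sqrt 2 : ℝ) : ℂ) / 2 := by
    field_simp
    linear_combination -hc2
  rw [hci]
  set E := Complex.exp (2 * Complex.I * (y : ℂ))
  set T := ((Real.tanh (y / Real.sqrt 2) : ℝ) : ℂ)
  set c := ((Real.sqrt 2 : ℝ) : ℂ)
  set S := (((Real.cosh (y / Real.sqrt 2))⁻¹ : ℝ) : ℂ) ^ 2 with hSdef
  linear_combination (E * (3 + S / 2 + 3 * Complex.I * c * T)) * hS
    + (E * (-(S * T ^ 2) / 2 + S ^ 2 / 4)) * hc2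
end

section
/- Coercivity of the linearization at the kink on odd functions: for ℒ = -d²/dy² - 1 + 3tanh²(y/√2), there exists c₀ > 0 such that ⟨ℒv, v⟩ ≥ c₀‖v‖²_{H¹} for every odd v ∈ H¹(ℝ). -/
/-!
Oddness gives `v 0 = 0`, so on each half of `[-R, R]` the Poincaré inequality
`∫ v² ≤ R² / 2 * ∫ v'²` holds: by the fundamental theorem of calculus and Cauchy–Schwarz,
`v x ² ≤ |x| ∫ v'²`. Inside `[-R, R]` the potential is discarded as nonnegative and Poincaré pays
for `-v²`; for `|y| ≥ R` the potential alone does, since `tanh² x ≥ x² / (1 + x²)`.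
With `R = 6/5` both regions leave a margin of `c₀ = 1/10`:
`(1 + c₀) R² / 2 = 0.792 ≤ 1 - c₀` and `3 tanh² (R / √2) ≥ 54/43 ≥ 1 + c₀`.
-/

open MeasureTheory Set

theorem sq_intervalIntegral_le_mul {g : ℝ → ℝ} {a b : ℝ} (hab : a ≤ b)
    (hg : IntervalIntegrable g volume a b)
    (hg2 : IntervalIntegrable (fun x => g x ^ 2) volume a b) :
    (∫ x in a..b, g x) ^ 2 ≤ (b - a) * ∫ x in a..b, g x ^ 2 := by
  rcases hab.eq_or_lt with rfl | hab
  · simp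
  have hlen : 0 < b - a := sub_pos.2 hab
  have hjensen : (⨍ x in a..b, g x) ^ 2 ≤ ⨍ x in a..b, g x ^ 2 :=
    (even_two.convexOn_pow (𝕜 := ℝ)).map_set_average_le (continuous_pow 2).continuousOn
      isClosed_univ (by simp [uIoc_of_le hab.le, hab]) (by simp [uIoc_of_le hab.le]) (by simp)
      (intervalIntegrable_iff.1 hg) (intervalIntegrable_iff.1 hg2)
  rw [interval_average_eq, interval_average_eq, smul_eq_mul, smul_eq_mul, mul_pow] at hjensen
  have := mul_le_mul_of_nonneg_left hjensen (sq_nonneg (b - a))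
  rw [← mul_assoc, ← mul_pow, mul_inv_cancel₀ hlen.ne', one_pow, one_mul] at this
  calc _ ≤ _ := this
    _ = _ := by field_simp

theorem IntervalIntegrable.of_sq {g : ℝ → ℝ} {a b : ℝ} (hg : AEStronglyMeasurable g)
    (hg2 : IntervalIntegrable (fun x => g x ^ 2) volume a b) : IntervalIntegrable g volume a b :=
  have : IsFiniteMeasure (volume.restrict (uIoc a b)) := isFiniteMeasure_restrict.2 (by simp [uIoc])
  intervalIntegrable_iff.2 <| ((memLp_two_iff_integrable_sq hg.restrict).2
    (intervalIntegrable_iff.1 hg2)).integrable one_le_two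

section Poincare

variable {v : ℝ → ℝ} {a b : ℝ}

theorem sq_le_mul_integral_deriv_sq (hab : a ≤ b) (hv : ∀ x ∈ Icc a b, DifferentiableAt ℝ v x)
    (ha : v a = 0) (hdv : IntervalIntegrable (fun x => deriv v x ^ 2) volume a b) :
    v b ^ 2 ≤ (b - a) * ∫ x in a..b, deriv v x ^ 2 := by
  have hdv1 : IntervalIntegrable (deriv v) volume a b :=
    hdv.of_sq (measurable_deriv v).aestronglyMeasurable
  have hftc : ∫ x in a..b, deriv v x = v b := by
    rw [intervalIntegral.integral_deriv_eq_sub (by rwa [uIcc_of_le hab]) hdv1, ha, sub_zero]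
  simpa [hftc] using sq_intervalIntegral_le_mul hab hdv1 hdv

theorem integral_sq_le_of_eq_zero_left (hab : a ≤ b)
    (hv : ∀ x ∈ Icc a b, DifferentiableAt ℝ v x) (ha : v a = 0)
    (hdv : IntervalIntegrable (fun x => deriv v x ^ 2) volume a b) :
    ∫ x in a..b, v x ^ 2 ≤ (b - a) ^ 2 / 2 * ∫ x in a..b, deriv v x ^ 2 := by
  set A := ∫ x in a..b, deriv v x ^ 2
  have hpoint : ∀ x ∈ Icc a b, v x ^ 2 ≤ (x - a) * A := fun x hx => by
    have hdvx : IntervalIntegrable (fun x => deriv v x ^ 2) volume a x :=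
      hdv.mono_set (by rw [uIcc_of_le hab, uIcc_of_le hx.1]; exact Icc_subset_Icc_right hx.2)
    calc v x ^ 2 ≤ (x - a) * ∫ y in a..x, deriv v y ^ 2 :=
          sq_le_mul_integral_deriv_sq hx.1 (fun y hy => hv y ⟨hy.1, hy.2.trans hx.2⟩) ha hdvx
      _ ≤ (x - a) * A := by
          gcongr
          · linarith [hx.1]
          · exact intervalIntegral.integral_mono_interval le_rfl hx.1 hx.2
              (Filter.Eventually.of_forall fun y => sq_nonneg _) hdv
  have hcont : ContinuousOn v (uIcc a b) := fun x hx =>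
    (hv x (by rwa [uIcc_of_le hab] at hx)).continuousAt.continuousWithinAt
  calc ∫ x in a..b, v x ^ 2 ≤ ∫ x in a..b, (x - a) * A :=
        intervalIntegral.integral_mono_on hab (hcont.pow 2).intervalIntegrable
          ((by fun_prop : Continuous fun x => (x - a) * A).intervalIntegrable _ _) hpoint
    _ = (b - a) ^ 2 / 2 * A := by
        rw [intervalIntegral.integral_mul_const,
          intervalIntegral.integral_comp_sub_right (fun x => x), integral_id]
        simp

theorem integral_sq_le_of_eq_zero_right (hab : a ≤ b)
    (hv : ∀ x ∈ Icc a b, DifferentiableAt ℝ v x) (hb : v b = 0)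
    (hdv : IntervalIntegrable (fun x => deriv v x ^ 2) volume a b) :
    ∫ x in a..b, v x ^ 2 ≤ (b - a) ^ 2 / 2 * ∫ x in a..b, deriv v x ^ 2 := by
  have hderiv : ∀ x, deriv (fun y => v (-y)) x ^ 2 = deriv v (-x) ^ 2 := fun x => by
    rw [deriv_comp_neg, neg_sq]
  have hreflect := integral_sq_le_of_eq_zero_left (v := fun x => v (-x)) (neg_le_neg hab)
    (fun x hx => (hv (-x) ⟨le_neg.1 hx.2, neg_le.1 hx.1⟩).comp x
      (hasDerivAt_neg x).differentiableAt)
    (by simpa using hb)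
    (by simpa only [hderiv] using
      ((IntervalIntegrable.iff_comp_neg (f := fun x => deriv v x ^ 2)).1 hdv).symm)
  simp only [hderiv, intervalIntegral.integral_comp_neg (fun x => v x ^ 2),
    intervalIntegral.integral_comp_neg (fun x => deriv v x ^ 2), neg_neg] at hreflect
  linarith

end Poincare

theorem integral_sq_le_of_eq_zero_center {v : ℝ → ℝ} {R : ℝ} (hR : 0 ≤ R)
    (hv : ∀ x ∈ Icc (-R) R, DifferentiableAt ℝ v x) (h0 : v 0 = 0)
    (hdv : IntervalIntegrable (fun x => deriv v x ^ 2) volume (-R) R) :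
    ∫ x in -R..R, v x ^ 2 ≤ R ^ 2 / 2 * ∫ x in -R..R, deriv v x ^ 2 := by
  have hcont : ContinuousOn (fun x => v x ^ 2) (uIcc (-R) R) := fun x hx =>
    ((hv x (by rwa [uIcc_of_le (by linarith)] at hx)).continuousAt.pow 2).continuousWithinAt
  have hsub_left : uIcc (-R) 0 ⊆ uIcc (-R) R := uIcc_subset_uIcc_left (by simp [uIcc, hR])
  have hsub_right : uIcc 0 R ⊆ uIcc (-R) R := uIcc_subset_uIcc_right (by simp [uIcc, hR])
  have hleft := integral_sq_le_of_eq_zero_right (neg_nonpos.2 hR)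
    (fun x hx => hv x ⟨hx.1, hx.2.trans hR⟩) h0 (hdv.mono_set hsub_left)
  have hright := integral_sq_le_of_eq_zero_left hR
    (fun x hx => hv x ⟨(neg_nonpos.2 hR).trans hx.1, hx.2⟩) h0 (hdv.mono_set hsub_right)
  rw [← intervalIntegral.integral_add_adjacent_intervals
      (hcont.mono hsub_left).intervalIntegrable (hcont.mono hsub_right).intervalIntegrable,
    ← intervalIntegral.integral_add_adjacent_intervals (hdv.mono_set hsub_left)
      (hdv.mono_set hsub_right)]
  simp only [zero_sub, neg_neg, sub_zero] at hleft hright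
  linarith

theorem coercive_of_potential_ge {W : ℝ → ℝ} {R c : ℝ} (hR : 0 ≤ R) (hW : ∀ y, 0 ≤ W y)
    (hWout : ∀ y, R ≤ |y| → 1 + c ≤ W y) (hc : (1 + c) * (R ^ 2 / 2) ≤ 1 - c)
    {v : ℝ → ℝ} (hv : Differentiable ℝ v) (hv0 : v 0 = 0)
    (hv2 : Integrable fun y => v y ^ 2) (hdv2 : Integrable fun y => deriv v y ^ 2)
    (hWv : Integrable fun y => W y * v y ^ 2) :
    c * ∫ y, (deriv v y ^ 2 + v y ^ 2) ≤ ∫ y, (deriv v y ^ 2 - v y ^ 2 + W y * v y ^ 2) := by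
  have hc1 : c ≤ 1 := by nlinarith [sq_nonneg R]
  set F := fun y => (1 - c) * deriv v y ^ 2 - (1 + c) * v y ^ 2 + W y * v y ^ 2
  have hF : Integrable F := ((hdv2.const_mul _).sub (hv2.const_mul _)).add hWv
  have hdiff : (∫ y, (deriv v y ^ 2 - v y ^ 2 + W y * v y ^ 2))
      - c * ∫ y, (deriv v y ^ 2 + v y ^ 2) = ∫ y, F y := by
    rw [← integral_const_mul, ← integral_sub]
    · congr 1 with y
      ring
    · exact (hdv2.sub hv2).add hWv
    · exact (hdv2.add hv2).const_mul c
  rw [← sub_nonneg, hdiff, ← integral_add_compl (s := Ioc (-R) R) measurableSet_Ioc hF]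
  refine add_nonneg ?_ (setIntegral_nonneg measurableSet_Ioc.compl fun y hy => ?_)
  · set A := ∫ y in Ioc (-R) R, deriv v y ^ 2
    set B := ∫ y in Ioc (-R) R, v y ^ 2
    have hA : 0 ≤ A := setIntegral_nonneg measurableSet_Ioc fun y _ => sq_nonneg _
    have hB : 0 ≤ B := setIntegral_nonneg measurableSet_Ioc fun y _ => sq_nonneg _
    have hpoincare : B ≤ R ^ 2 / 2 * A := by
      simpa only [intervalIntegral.integral_of_le (neg_le_self hR)] using
        integral_sq_le_of_eq_zero_center hR (fun x _ => hv x) hv0 hdv2.intervalIntegrable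
    have hWv0 : 0 ≤ ∫ y in Ioc (-R) R, W y * v y ^ 2 :=
      setIntegral_nonneg measurableSet_Ioc fun y _ => mul_nonneg (hW y) (sq_nonneg _)
    have hsplit : ∫ y in Ioc (-R) R, F y
        = (1 - c) * A - (1 + c) * B + ∫ y in Ioc (-R) R, W y * v y ^ 2 := by
      simp only [F]
      rw [integral_add, integral_sub, integral_const_mul, integral_const_mul]
      · exact (hdv2.const_mul _).integrableOn
      · exact (hv2.const_mul _).integrableOn
      · exact ((hdv2.const_mul _).sub (hv2.const_mul _)).integrableOn
      · exact hWv.integrableOn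
    rw [hsplit]
    nlinarith
  · have hRy : R ≤ |y| := by
      simp only [mem_compl_iff, mem_Ioc, not_and_or, not_lt, not_le] at hy
      rcases hy with hy | hy
      · exact le_abs.2 (Or.inr (by linarith))
      · exact le_abs.2 (Or.inl hy.le)
    nlinarith [hWout y hRy, sq_nonneg (deriv v y), sq_nonneg (v y)]

namespace Real

theorem continuous_tanh : Continuous tanh := by
  simp_rw [funext tanh_eq_sinh_div_cosh]
  exact continuous_sinh.div continuous_cosh fun x => (cosh_pos x).ne'

theorem tanh_sq_le_one (x : ℝ) : tanh x ^ 2 ≤ 1 :=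
  (sq_le_one_iff_abs_le_one _).2 (abs_tanh_lt_one x).le

theorem sq_div_one_add_sq_le_tanh_sq (x : ℝ) : x ^ 2 / (1 + x ^ 2) ≤ tanh x ^ 2 := by
  have hsinh : x ^ 2 ≤ sinh x ^ 2 := by
    rw [← sq_abs x, ← sq_abs (sinh x), abs_sinh]
    exact pow_le_pow_left₀ (abs_nonneg x) (self_le_sinh_iff.2 (abs_nonneg x)) 2
  rw [tanh_eq_sinh_div_cosh, div_pow, cosh_sq, div_le_div_iff₀ (by positivity) (by positivity)]
  nlinarith

end Real

theorem eleven_div_ten_le_three_mul_tanh_sq {y : ℝ} (hy : 6 / 5 ≤ |y|) :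
    11 / 10 ≤ 3 * Real.tanh (y / √2) ^ 2 := by
  have hx : 18 / 25 ≤ (y / √2) ^ 2 := by
    rw [div_pow, Real.sq_sqrt zero_le_two, ← sq_abs]
    nlinarith
  have htanh := Real.sq_div_one_add_sq_le_tanh_sq (y / √2)
  have : 18 / 43 ≤ (y / √2) ^ 2 / (1 + (y / √2) ^ 2) := by
    rw [le_div_iff₀ (by positivity)]
    linarith
  linarith

/-- Coercivity of ℒ = -d²/dy² - 1 + 3tanh²(y/√2) on odd H¹ functions:
⟨ℒv, v⟩ ≥ c₀‖v‖²_{H¹}. -/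
theorem L_coercive_odd :
    ∃ c₀ : ℝ, 0 < c₀ ∧
      ∀ v : ℝ → ℝ, Differentiable ℝ v →
        (∀ y : ℝ, v (-y) = -v y) →
        Integrable (fun y => (v y) ^ 2) →
        Integrable (fun y => (deriv v y) ^ 2) →
        (∫ y : ℝ, ((deriv v y) ^ 2 - (v y) ^ 2
            + 3 * (Real.tanh (y / Real.sqrt 2)) ^ 2 * (v y) ^ 2))
          ≥ c₀ * (∫ y : ℝ, ((deriv v y) ^ 2 + (v y) ^ 2)) := by
  refine ⟨1 / 10, by norm_num, fun v hv hodd hv2 hdv2 => ?_⟩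
  have hv0 : v 0 = 0 := by
    have := hodd 0
    rw [neg_zero] at this
    linarith
  have hWv : Integrable fun y => 3 * Real.tanh (y / √2) ^ 2 * v y ^ 2 :=
    hv2.bdd_mul (c := 3)
      (continuous_const.mul
        ((Real.continuous_tanh.comp (continuous_id.div_const _)).pow 2)).aestronglyMeasurable
      (ae_of_all _ fun y => by
        rw [Real.norm_eq_abs, abs_of_nonneg (by positivity)]
        linarith [Real.tanh_sq_le_one (y / √2)])
  exact (coercive_of_potential_ge (W := fun y => 3 * Real.tanh (y / √2) ^ 2) (R := 6 / 5)
    (by norm_num) (fun y => by positivity)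
    (fun y hy => by linarith [eleven_div_ten_le_three_mul_tanh_sq hy])
    (by norm_num) hv hv0 hv2 hdv2 hWv).ge
end
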